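/- For every n ≥ 0, the map ψ : SYT(θ^(n)) → P_n, defined by ψ(T) = p_1 p_2 … p_{2n+2} with p_i = E if the entry i+2 of T lies in the arm, p_i = N if i+2 lies in the leg, p_i = S if i+2 lies in the heart and 2 lies in the arm, and p_i = W if i+2 lies in the heart and 2 lies in the leg, is a bijection from SYT(θ^(n)) onto P_n. -/

import Mathlib

/-- The four unit steps of a lattice path. -/
inductive Step : Type
  | N | S | E | W
  deriving DecidableEq

/-- The vector in `ℤ × ℤ` corresponding to a step. -/
def stepVec : Step → ℤ × ℤ
  | Step.N => (0, 1)
  | Step.S => (0, -1)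
  | Step.E => (1, 0)
  | Step.W => (-1, 0)

/-- The endpoint of the lattice path described by the word `w`, starting at the origin. -/
def endpt (w : List Step) : ℤ × ℤ := (w.map stepVec).sum

/-- `w` is a lattice path in `𝒫ₙ`: it has length `2n+2`, stays weakly in the first
quadrant, and ends at `(n, n)`. -/
def IsPath (n : ℕ) (w : List Step) : Prop :=
  w.length = 2 * n + 2 ∧
  (∀ k : ℕ, 0 ≤ (endpt (w.take k)).1 ∧ 0 ≤ (endpt (w.take k)).2) ∧
  endpt w = ((n : ℤ), (n : ℤ))

/-- The cells of the Young diagram of `θ⁽ⁿ⁾ = (n+2, 2, 1ⁿ)`, in (row, column) matrix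
coordinates, 0-indexed, English orientation. -/
def cells (n : ℕ) : Set (ℕ × ℕ) :=
  {c | (c.1 = 0 ∧ c.2 ≤ n + 1) ∨ c = (1, 1) ∨ (c.2 = 0 ∧ 1 ≤ c.1 ∧ c.1 ≤ n + 1)}

/-- `T` is a standard Young tableau of shape `θ⁽ⁿ⁾`: it is a bijective filling of the
cells with `1, …, 2n+4` (and `0` elsewhere), strictly increasing along rows and
down columns. -/
def IsSYT (n : ℕ) (T : ℕ × ℕ → ℕ) : Prop :=
  (∀ c, c ∉ cells n → T c = 0) ∧
  Set.BijOn T (cells n) (Set.Icc 1 (2 * n + 4)) ∧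
  (∀ c ∈ cells n, ∀ d ∈ cells n, c.1 = d.1 → c.2 < d.2 → T c < T d) ∧
  (∀ c ∈ cells n, ∀ d ∈ cells n, c.2 = d.2 → c.1 < d.1 → T c < T d)

/-- The value `m` appears in the arm (first row) of `T`. -/
def InArm (n : ℕ) (T : ℕ × ℕ → ℕ) (m : ℕ) : Prop := ∃ j ≤ n + 1, T (0, j) = m

/-- The value `m` appears in the leg (first column) of `T`. -/
def InLeg (n : ℕ) (T : ℕ × ℕ → ℕ) (m : ℕ) : Prop := ∃ i ≤ n + 1, T (i, 0) = m

/-- The value `m` appears in the heart (the cell `(1,1)`) of `T`. -/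
def InHeart (T : ℕ × ℕ → ℕ) (m : ℕ) : Prop := T (1, 1) = m

open Classical in
/-- The map ψ: the `i`-th psiLetter (1-based, `i = k+1` for `k : Fin (2n+2)`) is determined by
the position of the entry `i+2` of `T`, and, if `i+2` is in the heart, by the position of `2`. -/
noncomputable def psi (n : ℕ) (T : ℕ × ℕ → ℕ) : List Step :=
  List.ofFn (fun k : Fin (2 * n + 2) =>
    if InArm n T (k.val + 3) then Step.E
    else if InLeg n T (k.val + 3) then Step.N
    else if InHeart T (k.val + 3) ∧ InArm n T 2 then Step.S
    else Step.W)

/-!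
In an SYT `T` of shape `θ⁽ⁿ⁾` the corner holds `1` and one of its two neighbours holds `2`. Arm
and leg are increasing chains, so `T` is determined by which of the values `3, …, 2n+4` lie in
the arm, in the leg and in the heart; this is what `ψ(T)` records, the letter of the heart value
telling which neighbour holds `2`. Counting the cells of arm and leg gives the endpoint `(n, n)`.
A path in `𝒫ₙ` has a single backward step, so staying in the quadrant says that this step is
preceded by a step of the other chain, i.e. that the heart exceeds its other neighbour.
Conversely, a path is the image of the tableau that fills arm and leg increasingly with the
values its steps assign to them.
-/

open Finset Step

lemma List.count_eq_card_filter_getElem {α : Type*} [DecidableEq α] (w : List α) (a : α) :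
    w.count a = #{i : Fin w.length | w[i] = a} :=
  (Fin.card_filter_univ_eq_vector_get_eq_count a ⟨w, rfl⟩).symm

lemma List.mem_take_iff_exists_getElem {α : Type*} {w : List α} {k : ℕ} {a : α} :
    a ∈ w.take k ↔ ∃ i : Fin w.length, i < k ∧ w[i] = a := by
  rw [List.mem_take_iff_getElem]
  exact ⟨fun ⟨j, hj, h⟩ => ⟨⟨j, by omega⟩, by simp; omega, h⟩, fun ⟨i, hi, h⟩ => ⟨i, by omega, h⟩⟩

lemma List.count_take_le_count_take_iff {α : Type*} [DecidableEq α] {w : List α} {a b : α}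
    (hab : a ≠ b) (ha : w.count a ≤ 1) :
    (∀ k, (w.take k).count a ≤ (w.take k).count b) ↔
      ∀ i : Fin w.length, w[i] = a → ∃ j < i, w[j] = b := by
  constructor
  · intro h i hi
    have hb : b ∈ w.take (i + 1) := by
      rw [← List.count_pos_iff]
      have := h (i + 1)
      have : a ∈ w.take (i + 1) := List.mem_take_iff_exists_getElem.2 ⟨i, by omega, hi⟩
      rw [← List.count_pos_iff] at this
      omega
    obtain ⟨j, hj, rfl⟩ := List.mem_take_iff_exists_getElem.1 hb
    refine ⟨j, lt_of_le_of_ne (by omega) fun hji => hab ?_, rfl⟩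
    rw [← hi, hji]
  · intro h k
    by_cases hak : a ∈ w.take k
    · obtain ⟨i, hik, hi⟩ := List.mem_take_iff_exists_getElem.1 hak
      obtain ⟨j, hji, hj⟩ := h i hi
      have hbk : 0 < (w.take k).count b :=
        List.count_pos_iff.2 (List.mem_take_iff_exists_getElem.2 ⟨j, by omega, hj⟩)
      have := (List.take_sublist k w).count_le a
      omega
    · rw [List.count_eq_zero.2 hak]
      exact Nat.zero_le _

lemma Finset.orderEmbOfFin_one_le {α : Type*} [LinearOrder α] {s : Finset α} {k : ℕ}
    (h : #s = k + 2) {x : α} (hx : x ∈ s) (hx0 : x ≠ s.orderEmbOfFin h 0) :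
    s.orderEmbOfFin h 1 ≤ x := by
  obtain ⟨i, rfl⟩ : x ∈ Set.range (s.orderEmbOfFin h) := by simpa using hx
  exact (s.orderEmbOfFin h).monotone (Fin.one_le_of_ne_zero fun hi => hx0 (by rw [hi]))

lemma Finset.sort_getD_eq_orderEmbOfFin {α : Type*} [LinearOrder α] {k : ℕ} (s : Finset α)
    (h : #s = k) (j : Fin k) (d : α) : s.sort.getD j d = s.orderEmbOfFin h j := by
  rw [orderEmbOfFin_apply, List.getD_eq_getElem _ _ (by simp [h])]
  rfl

lemma endpt_cons (a : Step) (w : List Step) : endpt (a :: w) = stepVec a + endpt w := by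
  simp [endpt]

lemma endpt_fst (w : List Step) : (endpt w).1 = (w.count E : ℤ) - w.count W := by
  induction w with
  | nil => rfl
  | cons a w ih => cases a <;> simp [endpt_cons, stepVec, ih] <;> ring

lemma endpt_snd (w : List Step) : (endpt w).2 = (w.count N : ℤ) - w.count S := by
  induction w with
  | nil => rfl
  | cons a w ih => cases a <;> simp [endpt_cons, stepVec, ih] <;> ring

lemma count_add_count_add_count_add_count (w : List Step) :
    w.count E + w.count N + w.count S + w.count W = w.length := by
  induction w with
  | nil => rfl
  | cons a w ih => cases a <;> simp <;> omega

lemma isPath_iff {n : ℕ} {w : List Step} :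
    IsPath n w ↔ w.length = 2 * n + 2 ∧ w.count E = n + w.count W ∧ w.count N = n + w.count S ∧
      (∀ i : Fin w.length, w[i] = S → ∃ j < i, w[j] = N) ∧
      (∀ i : Fin w.length, w[i] = W → ∃ j < i, w[j] = E) := by
  have hx (k : ℕ) : 0 ≤ (endpt (w.take k)).1 ↔ (w.take k).count W ≤ (w.take k).count E := by
    rw [endpt_fst]; omega
  have hy (k : ℕ) : 0 ≤ (endpt (w.take k)).2 ↔ (w.take k).count S ≤ (w.take k).count N := by
    rw [endpt_snd]; omega
  have hend : endpt w = ((n : ℤ), (n : ℤ)) ↔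
      w.count E = n + w.count W ∧ w.count N = n + w.count S := by
    rw [Prod.ext_iff, endpt_fst, endpt_snd]; omega
  have htotal := count_add_count_add_count_add_count w
  simp only [IsPath, hx, hy, hend, forall_and]
  constructor
  · rintro ⟨hlen, ⟨hW, hS⟩, hE, hN⟩
    exact ⟨hlen, hE, hN, (List.count_take_le_count_take_iff (by decide) (by omega)).1 hS,
      (List.count_take_le_count_take_iff (by decide) (by omega)).1 hW⟩
  · rintro ⟨hlen, hE, hN, hS, hW⟩
    exact ⟨hlen, ⟨(List.count_take_le_count_take_iff (by decide) (by omega)).2 hW,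
      (List.count_take_le_count_take_iff (by decide) (by omega)).2 hS⟩, hE, hN⟩

def backStepIdx (w : List Step) : ℕ := w.findIdx (fun s => s == S || s == W)

namespace IsPath

variable {n : ℕ} {w : List Step} (hw : IsPath n w)
include hw

lemma count_S_add_count_W : w.count S + w.count W = 1 := by
  obtain ⟨hlen, hE, hN, -⟩ := isPath_iff.1 hw
  have := count_add_count_add_count_add_count w
  omega

lemma eq_of_backStep {i j : Fin w.length} (hi : w[i] = S ∨ w[i] = W)
    (hj : w[j] = S ∨ w[j] = W) : i = j := by
  have hcard : #{i : Fin w.length | w[i] = S ∨ w[i] = W} ≤ 1 := by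
    rw [filter_or, card_union_of_disjoint (disjoint_filter.2 fun _ _ h => by rw [h]; decide),
      ← List.count_eq_card_filter_getElem, ← List.count_eq_card_filter_getElem,
      hw.count_S_add_count_W]
  exact card_le_one.1 hcard i (by simpa) j (by simpa)

lemma exists_backStep : ∃ i : Fin w.length, w[i] = S ∨ w[i] = W := by
  have := hw.count_S_add_count_W
  rcases Nat.eq_zero_or_pos (w.count S) with h | h
  · obtain ⟨i, hi⟩ := List.mem_iff_get.1 (List.count_pos_iff.1 (show 0 < w.count W by omega))
    exact ⟨i, Or.inr hi⟩
  · obtain ⟨i, hi⟩ := List.mem_iff_get.1 (List.count_pos_iff.1 h)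
    exact ⟨i, Or.inl hi⟩

lemma backStepIdx_eq {i : Fin w.length} (hi : w[i] = S ∨ w[i] = W) :
    backStepIdx w = i := by
  rw [backStepIdx, List.findIdx_eq i.2]
  refine ⟨by simpa using hi, fun j hj => ?_⟩
  by_contra hp
  have := hw.eq_of_backStep (i := ⟨j, by omega⟩) (by simpa [or_iff_not_imp_left] using hp) hi
  simp [Fin.ext_iff] at this
  omega

end IsPath

/-- The values that the tableau of a path puts into the chain (arm or leg) whose steps are `a`:
the corner value `1`, the value `2` when the backward step is `b`, and `i + 3` for each step
`w[i] = a`. -/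
def chainValues (a b : Step) (w : List Step) : Finset ℕ :=
  insert 1 ((if b ∈ w then {2} else ∅) ∪
    ({i : Fin w.length | w[i] = a} : Finset _).image (·.val + 3))

section chainValues

variable {a b : Step} {w : List Step} {m : ℕ}

lemma mem_chainValues :
    m ∈ chainValues a b w ↔ m = 1 ∨ (m = 2 ∧ b ∈ w) ∨ ∃ i : Fin w.length, w[i] = a ∧ m = i + 3 := by
  unfold chainValues
  split_ifs with hb <;> simp [hb, eq_comm]

lemma card_chainValues : #(chainValues a b w) = w.count a + if b ∈ w then 2 else 1 := by
  have hdisj : Disjoint (if b ∈ w then {2} else ∅)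
      (({i : Fin w.length | w[i] = a} : Finset _).image (·.val + 3)) := by
    split_ifs <;> simp
  rw [chainValues, card_insert_of_notMem (by split_ifs <;> simp), card_union_of_disjoint hdisj,
    card_image_of_injective _ fun i j h => Fin.ext (by simpa using h),
    List.count_eq_card_filter_getElem]
  split_ifs <;> simp; omega

lemma one_le_of_mem_chainValues (hm : m ∈ chainValues a b w) : 1 ≤ m := by
  rcases mem_chainValues.1 hm with rfl | ⟨rfl, -⟩ | ⟨i, -, rfl⟩ <;> omega

lemma le_of_mem_chainValues (hm : m ∈ chainValues a b w) : m ≤ w.length + 2 := by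
  rcases mem_chainValues.1 hm with rfl | ⟨rfl, -⟩ | ⟨i, -, rfl⟩ <;> omega

lemma mem_chainValues_iff_of {P : ℕ → Prop} (h1 : P 1)
    (h2 : b ∈ w ↔ P 2) (hstep : ∀ i : Fin w.length, w[i] = a ↔ P (i + 3))
    (hbound : ∀ m, P m → 1 ≤ m ∧ m ≤ w.length + 2) : m ∈ chainValues a b w ↔ P m := by
  rw [mem_chainValues]
  constructor
  · rintro (rfl | ⟨rfl, h⟩ | ⟨i, hi, rfl⟩)
    exacts [h1, h2.1 h, (hstep i).1 hi]
  · intro hm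
    obtain ⟨hm1, hm2⟩ := hbound m hm
    rcases (by omega : m = 1 ∨ m = 2 ∨ 3 ≤ m) with rfl | rfl | hm3
    · exact Or.inl rfl
    · exact Or.inr (Or.inl ⟨rfl, h2.2 hm⟩)
    · refine Or.inr (Or.inr ⟨⟨m - 3, by omega⟩, (hstep _).2 ?_, by simp; omega⟩)
      simpa [Nat.sub_add_cancel hm3] using hm

lemma orderEmbOfFin_chainValues_zero {k : ℕ}
    (h : #(chainValues a b w) = k + 2) : (chainValues a b w).orderEmbOfFin h 0 = 1 := by
  rw [← Fin.zero_eta, orderEmbOfFin_zero h (by omega)]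
  exact le_antisymm (min'_le _ _ (mem_chainValues.2 (Or.inl rfl)))
    (one_le_of_mem_chainValues (min'_mem _ _))

lemma orderEmbOfFin_chainValues_one_le {k : ℕ}
    (h : #(chainValues a b w) = k + 2) {x : ℕ} (hx : x ∈ chainValues a b w) (hx1 : x ≠ 1) :
    (chainValues a b w).orderEmbOfFin h 1 ≤ x :=
  orderEmbOfFin_one_le h hx (by rwa [orderEmbOfFin_chainValues_zero])

end chainValues

section Tableau

variable {n : ℕ} {T : ℕ × ℕ → ℕ}

def armSeq (n : ℕ) (T : ℕ × ℕ → ℕ) (j : Fin (n + 2)) : ℕ := T (0, j)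

def legSeq (n : ℕ) (T : ℕ × ℕ → ℕ) (i : Fin (n + 2)) : ℕ := T (i, 0)

lemma inArm_iff_mem_range {m : ℕ} : InArm n T m ↔ m ∈ Set.range (armSeq n T) :=
  ⟨fun ⟨j, hj, h⟩ => ⟨⟨j, by omega⟩, h⟩, fun ⟨j, h⟩ => ⟨j, by omega, h⟩⟩

lemma inLeg_iff_mem_range {m : ℕ} : InLeg n T m ↔ m ∈ Set.range (legSeq n T) :=
  ⟨fun ⟨i, hi, h⟩ => ⟨⟨i, by omega⟩, h⟩, fun ⟨i, h⟩ => ⟨i, by omega, h⟩⟩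

lemma mem_cells_iff {c : ℕ × ℕ} :
    c ∈ cells n ↔ (∃ j ≤ n + 1, c = (0, j)) ∨ c = (1, 1) ∨ ∃ i ≤ n, c = (i + 1, 0) := by
  obtain ⟨i, j⟩ := c
  simp only [cells, Set.mem_ofPred_eq, Prod.mk.injEq]
  constructor
  · rintro (⟨rfl, hj⟩ | h | ⟨rfl, hi, hi'⟩)
    · exact Or.inl ⟨j, hj, rfl, rfl⟩
    · exact Or.inr (Or.inl h)
    · exact Or.inr (Or.inr ⟨i - 1, by omega, by omega, rfl⟩)
  · rintro (⟨j, hj, rfl, rfl⟩ | h | ⟨i, hi, rfl, rfl⟩)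
    · exact Or.inl ⟨rfl, hj⟩
    · exact Or.inr (Or.inl h)
    · exact Or.inr (Or.inr ⟨rfl, by omega, by omega⟩)

lemma arm_mem_cells {j : ℕ} (hj : j ≤ n + 1) : (0, j) ∈ cells n := Or.inl ⟨rfl, hj⟩

lemma heart_mem_cells : (1, 1) ∈ cells n := Or.inr (Or.inl rfl)

lemma leg_mem_cells {i : ℕ} (hi : i ≤ n + 1) : (i, 0) ∈ cells n := by
  rcases Nat.eq_zero_or_pos i with rfl | hpos
  exacts [arm_mem_cells (by omega), Or.inr (Or.inr ⟨rfl, hpos, hi⟩)]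

lemma cells_eq_coe : cells n = ↑((Iic (n + 1)).image (fun j => (0, j)) ∪
    insert (1, 1) ((Iic n).image (fun i => (i + 1, 0)))) := by
  ext c
  simp only [mem_cells_iff, coe_union, coe_insert, coe_image, coe_Iic, Set.mem_union,
    Set.mem_insert_iff, Set.mem_image, Set.mem_Iic]
  simp only [eq_comm (a := c)]

lemma injOn_cells_of_surjOn (hmaps : Set.MapsTo T (cells n) (Set.Icc 1 (2 * n + 4)))
    (hsurj : Set.SurjOn T (cells n) (Set.Icc 1 (2 * n + 4))) : Set.InjOn T (cells n) := by
  rw [cells_eq_coe, ← coe_Icc] at *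
  refine injOn_of_surjOn_of_card_le T hmaps hsurj ?_
  grw [card_union_le, card_insert_le, card_image_le, card_image_le]
  simp
  omega

/-- The only row and column comparisons in `θ⁽ⁿ⁾` are within the arm, within the leg, and
between the heart and its two neighbours. -/
lemma isSYT_of_strictMono (hzero : ∀ c ∉ cells n, T c = 0)
    (hmaps : Set.MapsTo T (cells n) (Set.Icc 1 (2 * n + 4)))
    (hsurj : Set.SurjOn T (cells n) (Set.Icc 1 (2 * n + 4)))
    (harm : StrictMono (armSeq n T)) (hleg : StrictMono (legSeq n T))
    (harm_heart : T (0, 1) < T (1, 1)) (hleg_heart : T (1, 0) < T (1, 1)) : IsSYT n T := by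
  refine ⟨hzero, ⟨hmaps, injOn_cells_of_surjOn hmaps hsurj, hsurj⟩, ?_, ?_⟩ <;>
  · intro c hc d hd h₁ h₂
    rcases mem_cells_iff.1 hc with ⟨j, hj, rfl⟩ | rfl | ⟨i, hi, rfl⟩ <;>
    rcases mem_cells_iff.1 hd with ⟨j', hj', rfl⟩ | rfl | ⟨i', hi', rfl⟩ <;>
    simp only at h₁ h₂
    all_goals first
      | omega
      | exact harm (a := ⟨j, by omega⟩) (b := ⟨j', by omega⟩) h₂
      | exact hleg (a := ⟨i + 1, by omega⟩) (b := ⟨i' + 1, by omega⟩) h₂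
      | (obtain rfl : j = 0 := by omega); exact hleg (a := 0) (b := ⟨i' + 1, by omega⟩) h₂
      | (obtain rfl : i = 0 := by omega); exact hleg_heart
      | (obtain rfl : j = 1 := by omega); exact harm_heart

end Tableau

namespace IsSYT

variable {n : ℕ} {T : ℕ × ℕ → ℕ} (hT : IsSYT n T)
include hT

lemma armSeq_strictMono : StrictMono (armSeq n T) := fun a b hab =>
  hT.2.2.1 _ (arm_mem_cells (by omega)) _ (arm_mem_cells (by omega)) rfl hab

lemma legSeq_strictMono : StrictMono (legSeq n T) := fun a b hab =>
  hT.2.2.2 _ (leg_mem_cells (by omega)) _ (leg_mem_cells (by omega)) rfl hab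

lemma arm_one_lt_heart : T (0, 1) < T (1, 1) :=
  hT.2.2.2 _ (arm_mem_cells (by omega)) _ heart_mem_cells rfl one_pos

lemma leg_one_lt_heart : T (1, 0) < T (1, 1) :=
  hT.2.2.1 _ (leg_mem_cells (by omega)) _ heart_mem_cells rfl one_pos

lemma corner_lt {c : ℕ × ℕ} (hc : c ∈ cells n) (hne : c ≠ (0, 0)) : T (0, 0) < T c := by
  have harm := hT.armSeq_strictMono
  have hleg := hT.legSeq_strictMono
  rcases mem_cells_iff.1 hc with ⟨j, hj, rfl⟩ | rfl | ⟨i, hi, rfl⟩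
  · have hj0 : j ≠ 0 := by rintro rfl; exact hne rfl
    exact harm (a := 0) (b := ⟨j, by omega⟩) (Fin.lt_def.2 (by simp; omega))
  · exact (harm (a := 0) (b := 1) Fin.zero_lt_one).trans hT.arm_one_lt_heart
  · exact hleg (a := 0) (b := ⟨i + 1, by omega⟩) (by simp [Fin.lt_def])

lemma corner_eq_one : T (0, 0) = 1 := by
  obtain ⟨c, hc, hc1⟩ := hT.2.1.2.2 (show 1 ∈ Set.Icc 1 (2 * n + 4) by simp)
  have h00 := (hT.2.1.1 (arm_mem_cells (n := n) (Nat.zero_le _))).1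
  by_contra hne
  have := hT.corner_lt hc (by rintro rfl; exact hne hc1)
  omega

lemma three_le_heart : 3 ≤ T (1, 1) := by
  have := hT.corner_lt (arm_mem_cells (j := 1) (by omega)) (by simp)
  have := hT.arm_one_lt_heart
  have := hT.corner_eq_one
  omega

lemma heart_le : T (1, 1) ≤ 2 * n + 4 := (hT.2.1.1 heart_mem_cells).2

variable {m : ℕ}

lemma mem_Icc_of_inArm (h : InArm n T m) : m ∈ Set.Icc 1 (2 * n + 4) := by
  obtain ⟨j, hj, rfl⟩ := h
  exact hT.2.1.1 (arm_mem_cells hj)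

lemma mem_Icc_of_inLeg (h : InLeg n T m) : m ∈ Set.Icc 1 (2 * n + 4) := by
  obtain ⟨i, hi, rfl⟩ := h
  exact hT.2.1.1 (leg_mem_cells hi)

lemma inArm_or_inLeg_or_inHeart (hm : m ∈ Set.Icc 1 (2 * n + 4)) :
    InArm n T m ∨ InLeg n T m ∨ InHeart T m := by
  obtain ⟨c, hc, rfl⟩ := hT.2.1.2.2 hm
  rcases mem_cells_iff.1 hc with ⟨j, hj, rfl⟩ | rfl | ⟨i, hi, rfl⟩
  exacts [Or.inl ⟨j, hj, rfl⟩, Or.inr (Or.inr rfl), Or.inr (Or.inl ⟨i + 1, by omega, rfl⟩)]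

lemma eq_one_of_inArm_of_inLeg (ha : InArm n T m) (hl : InLeg n T m) : m = 1 := by
  obtain ⟨j, hj, rfl⟩ := ha
  obtain ⟨i, hi, he⟩ := hl
  obtain ⟨rfl, rfl⟩ := Prod.mk.inj (hT.2.1.2.1 (leg_mem_cells hi) (arm_mem_cells hj) he)
  exact hT.corner_eq_one

lemma not_inArm_of_inHeart (h : InHeart T m) : ¬InArm n T m := by
  rintro ⟨j, hj, he⟩
  simpa using hT.2.1.2.1 (arm_mem_cells hj) heart_mem_cells (he.trans h.symm)

lemma not_inLeg_of_inHeart (h : InHeart T m) : ¬InLeg n T m := by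
  rintro ⟨i, hi, he⟩
  have := Prod.mk.inj (hT.2.1.2.1 (leg_mem_cells hi) heart_mem_cells (he.trans h.symm))
  omega

lemma inLeg_two_iff : InLeg n T 2 ↔ ¬InArm n T 2 := by
  have h3 := hT.three_le_heart
  constructor
  · exact fun hl ha => absurd (hT.eq_one_of_inArm_of_inLeg ha hl) (by norm_num)
  · intro ha
    rcases hT.inArm_or_inLeg_or_inHeart (m := 2) ⟨by norm_num, by omega⟩ with h | h | h
    exacts [absurd h ha, h, absurd h (by unfold InHeart; omega)]

end IsSYT

/-- Arm and leg are increasing chains, and the heart holds the one remaining value. -/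
theorem IsSYT.ext {n : ℕ} {T₁ T₂ : ℕ × ℕ → ℕ} (h₁ : IsSYT n T₁) (h₂ : IsSYT n T₂)
    (harm : ∀ m, InArm n T₁ m ↔ InArm n T₂ m) (hleg : ∀ m, InLeg n T₁ m ↔ InLeg n T₂ m) :
    T₁ = T₂ := by
  have harmSeq : armSeq n T₁ = armSeq n T₂ :=
    (h₁.armSeq_strictMono.range_inj h₂.armSeq_strictMono).1 <| Set.ext fun m => by
      rw [← inArm_iff_mem_range, ← inArm_iff_mem_range, harm]
  have hlegSeq : legSeq n T₁ = legSeq n T₂ :=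
    (h₁.legSeq_strictMono.range_inj h₂.legSeq_strictMono).1 <| Set.ext fun m => by
      rw [← inLeg_iff_mem_range, ← inLeg_iff_mem_range, hleg]
  have hheart : T₁ (1, 1) = T₂ (1, 1) := by
    have hh : InHeart T₁ (T₁ (1, 1)) := rfl
    rcases h₂.inArm_or_inLeg_or_inHeart (h₁.2.1.1 heart_mem_cells) with h | h | h
    · exact absurd ((harm _).2 h) (h₁.not_inArm_of_inHeart hh)
    · exact absurd ((hleg _).2 h) (h₁.not_inLeg_of_inHeart hh)
    · exact h.symm
  funext c
  by_cases hc : c ∈ cells n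
  · rcases mem_cells_iff.1 hc with ⟨j, hj, rfl⟩ | rfl | ⟨i, hi, rfl⟩
    · exact congrFun harmSeq ⟨j, by omega⟩
    · exact hheart
    · exact congrFun hlegSeq ⟨i + 1, by omega⟩
  · rw [h₁.1 c hc, h₂.1 c hc]

open Classical in
noncomputable def psiLetter (n : ℕ) (T : ℕ × ℕ → ℕ) (k : ℕ) : Step :=
  if InArm n T (k + 3) then E
  else if InLeg n T (k + 3) then N
  else if InHeart T (k + 3) ∧ InArm n T 2 then S
  else W

section psi

variable {n : ℕ} {T : ℕ × ℕ → ℕ}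

lemma length_psi : (psi n T).length = 2 * n + 2 := List.length_ofFn

lemma getElem_psi {k : ℕ} (hk : k < (psi n T).length) : (psi n T)[k] = psiLetter n T k :=
  List.getElem_ofFn ..

lemma mem_psi {a : Step} : a ∈ psi n T ↔ ∃ k < 2 * n + 2, psiLetter n T k = a := by
  rw [psi, List.mem_ofFn, Fin.exists_iff]
  exact exists_congr fun k => ⟨fun ⟨hk, h⟩ => ⟨hk, h⟩, fun ⟨hk, h⟩ => ⟨hk, h⟩⟩

lemma psiLetter_eq_E_iff {k : ℕ} : psiLetter n T k = E ↔ InArm n T (k + 3) := by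
  unfold psiLetter; split_ifs <;> simp_all

end psi

namespace IsSYT

variable {n : ℕ} {T : ℕ × ℕ → ℕ} (hT : IsSYT n T) {k : ℕ}
include hT

lemma psiLetter_eq_N_iff : psiLetter n T k = N ↔ InLeg n T (k + 3) := by
  have := hT.eq_one_of_inArm_of_inLeg (m := k + 3)
  unfold psiLetter; split_ifs <;> simp_all

lemma psiLetter_eq_S_iff : psiLetter n T k = S ↔ InHeart T (k + 3) ∧ InArm n T 2 := by
  have := hT.not_inArm_of_inHeart (m := k + 3)
  have := hT.not_inLeg_of_inHeart (m := k + 3)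
  unfold psiLetter; split_ifs <;> simp_all

lemma psiLetter_eq_W_iff (hk : k < 2 * n + 2) :
    psiLetter n T k = W ↔ InHeart T (k + 3) ∧ InLeg n T 2 := by
  have := hT.not_inArm_of_inHeart (m := k + 3)
  have := hT.not_inLeg_of_inHeart (m := k + 3)
  have := hT.inArm_or_inLeg_or_inHeart (m := k + 3) ⟨by omega, by omega⟩
  have := hT.inLeg_two_iff
  unfold psiLetter; split_ifs <;> simp_all

lemma S_mem_psi : S ∈ psi n T ↔ InArm n T 2 := by
  have := hT.three_le_heart
  have := hT.heart_le
  rw [mem_psi]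
  constructor
  · rintro ⟨k, -, hk⟩
    exact (hT.psiLetter_eq_S_iff.1 hk).2
  · exact fun h => ⟨T (1, 1) - 3, by omega, hT.psiLetter_eq_S_iff.2 ⟨by unfold InHeart; omega, h⟩⟩

lemma W_mem_psi : W ∈ psi n T ↔ InLeg n T 2 := by
  have := hT.three_le_heart
  have := hT.heart_le
  rw [mem_psi]
  constructor
  · rintro ⟨k, hk, hW⟩
    exact ((hT.psiLetter_eq_W_iff hk).1 hW).2
  · exact fun h => ⟨T (1, 1) - 3, by omega,
      (hT.psiLetter_eq_W_iff (by omega)).2 ⟨by unfold InHeart; omega, h⟩⟩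

lemma mem_chainValues_E_S {m : ℕ} : m ∈ chainValues E S (psi n T) ↔ InArm n T m :=
  mem_chainValues_iff_of ⟨0, by omega, hT.corner_eq_one⟩ hT.S_mem_psi
    (fun i => by rw [Fin.getElem_fin, getElem_psi, psiLetter_eq_E_iff])
    (fun m h => by simpa [length_psi] using hT.mem_Icc_of_inArm h)

lemma mem_chainValues_N_W {m : ℕ} : m ∈ chainValues N W (psi n T) ↔ InLeg n T m :=
  mem_chainValues_iff_of ⟨0, by omega, hT.corner_eq_one⟩ hT.W_mem_psi
    (fun i => by rw [Fin.getElem_fin, getElem_psi, hT.psiLetter_eq_N_iff])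
    (fun m h => by simpa [length_psi] using hT.mem_Icc_of_inLeg h)

lemma card_chainValues_E_S : #(chainValues E S (psi n T)) = n + 2 := by
  have : chainValues E S (psi n T) = univ.image (armSeq n T) := by
    ext m
    simp [hT.mem_chainValues_E_S, inArm_iff_mem_range]
  rw [this, card_image_of_injective _ hT.armSeq_strictMono.injective, card_univ, Fintype.card_fin]

lemma card_chainValues_N_W : #(chainValues N W (psi n T)) = n + 2 := by
  have : chainValues N W (psi n T) = univ.image (legSeq n T) := by
    ext m
    simp [hT.mem_chainValues_N_W, inLeg_iff_mem_range]
  rw [this, card_image_of_injective _ hT.legSeq_strictMono.injective, card_univ, Fintype.card_fin]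

lemma counts_psi : (psi n T).count E = n + (psi n T).count W ∧
    (psi n T).count N = n + (psi n T).count S := by
  -- arm and leg hold `n + 2` values each, among them `1` and one of them `2`
  have hSW : S ∈ psi n T ↔ W ∉ psi n T := by
    rw [hT.S_mem_psi, hT.W_mem_psi, hT.inLeg_two_iff, not_not]
  have hA := hT.card_chainValues_E_S
  have hL := hT.card_chainValues_N_W
  rw [card_chainValues] at hA hL
  have htotal := count_add_count_add_count_add_count (psi n T)
  rw [length_psi] at htotal
  by_cases h : S ∈ psi n T
  · have hW := hSW.1 h
    rw [if_pos h] at hA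
    rw [if_neg hW] at hL
    have := List.count_pos_iff.2 h
    rw [List.count_eq_zero.2 hW] at htotal ⊢
    omega
  · have hW : W ∈ psi n T := by tauto
    rw [if_neg h] at hA
    rw [if_pos hW] at hL
    have := List.count_pos_iff.2 hW
    rw [List.count_eq_zero.2 h] at htotal ⊢
    omega

lemma exists_N_before_S (i : Fin (psi n T).length) (hi : (psi n T)[i] = S) :
    ∃ j < i, (psi n T)[j] = N := by
  rw [Fin.getElem_fin, getElem_psi, hT.psiLetter_eq_S_iff] at hi
  obtain ⟨hheart, h2⟩ := hi
  unfold InHeart at hheart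
  have := hT.heart_le
  have hlt := hT.leg_one_lt_heart
  have h1 := hT.corner_eq_one ▸ hT.corner_lt (leg_mem_cells (i := 1) (by omega)) (by simp)
  have h2' : T (1, 0) ≠ 2 := fun h => hT.inLeg_two_iff.1 (h ▸ ⟨1, by omega, rfl⟩) h2
  refine ⟨⟨T (1, 0) - 3, by rw [length_psi]; omega⟩, Fin.lt_def.2 (by dsimp only; omega), ?_⟩
  rw [Fin.getElem_fin, getElem_psi, hT.psiLetter_eq_N_iff, Nat.sub_add_cancel (by omega)]
  exact ⟨1, by omega, rfl⟩

lemma exists_E_before_W (i : Fin (psi n T).length) (hi : (psi n T)[i] = W) :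
    ∃ j < i, (psi n T)[j] = E := by
  rw [Fin.getElem_fin, getElem_psi, hT.psiLetter_eq_W_iff (by simpa [length_psi] using i.2)] at hi
  obtain ⟨hheart, h2⟩ := hi
  unfold InHeart at hheart
  have := hT.heart_le
  have hlt := hT.arm_one_lt_heart
  have h1 := hT.corner_eq_one ▸ hT.corner_lt (arm_mem_cells (j := 1) (by omega)) (by simp)
  have h2' : T (0, 1) ≠ 2 := fun h => hT.inLeg_two_iff.1 h2 (h ▸ ⟨1, by omega, rfl⟩)
  refine ⟨⟨T (0, 1) - 3, by rw [length_psi]; omega⟩, Fin.lt_def.2 (by dsimp only; omega), ?_⟩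
  rw [Fin.getElem_fin, getElem_psi, psiLetter_eq_E_iff, Nat.sub_add_cancel (by omega)]
  exact ⟨1, by omega, rfl⟩

theorem isPath_psi : IsPath n (psi n T) :=
  isPath_iff.2 ⟨length_psi, hT.counts_psi.1, hT.counts_psi.2, hT.exists_N_before_S,
    hT.exists_E_before_W⟩

end IsSYT

def tableauOfPath (n : ℕ) (w : List Step) : ℕ × ℕ → ℕ
  | (0, j) => if j ≤ n + 1 then (chainValues E S w).sort.getD j 0 else 0
  | (1, 1) => backStepIdx w + 3
  | (i, 0) => if i ≤ n + 1 then (chainValues N W w).sort.getD i 0 else 0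
  | _ => 0

lemma tableauOfPath_heart (n : ℕ) (w : List Step) : tableauOfPath n w (1, 1) = backStepIdx w + 3 :=
  rfl

lemma tableauOfPath_eq_zero {n : ℕ} {w : List Step} {c : ℕ × ℕ} (hc : c ∉ cells n) :
    tableauOfPath n w c = 0 := by
  obtain ⟨_ | _ | i, _ | _ | j⟩ := c <;> simp_all [tableauOfPath, mem_cells_iff]

namespace IsPath

variable {n : ℕ} {w : List Step} (hw : IsPath n w)
include hw

lemma card_chainValues_E_S : #(chainValues E S w) = n + 2 := by
  obtain ⟨-, hE, -⟩ := isPath_iff.1 hw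
  have hSW := hw.count_S_add_count_W
  rw [card_chainValues]
  by_cases h : S ∈ w
  · have := List.count_pos_iff.2 h
    rw [if_pos h]
    omega
  · rw [if_neg h]
    rw [List.count_eq_zero.2 h] at hSW
    omega

lemma card_chainValues_N_W : #(chainValues N W w) = n + 2 := by
  obtain ⟨-, -, hN, -⟩ := isPath_iff.1 hw
  have hSW := hw.count_S_add_count_W
  rw [card_chainValues]
  by_cases h : W ∈ w
  · have := List.count_pos_iff.2 h
    rw [if_pos h]
    omega
  · rw [if_neg h]
    rw [List.count_eq_zero.2 h] at hSW
    omega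

lemma armSeq_tableauOfPath :
    armSeq n (tableauOfPath n w) = (chainValues E S w).orderEmbOfFin hw.card_chainValues_E_S := by
  funext j
  simp only [armSeq, tableauOfPath, if_pos (Nat.le_of_lt_succ j.2)]
  exact sort_getD_eq_orderEmbOfFin _ _ j 0

lemma legSeq_tableauOfPath :
    legSeq n (tableauOfPath n w) = (chainValues N W w).orderEmbOfFin hw.card_chainValues_N_W := by
  funext i
  obtain ⟨_ | i, hi⟩ := i
  · -- the corner is filled from the arm, and both chains start with `1`
    have h0 := congrFun hw.armSeq_tableauOfPath 0
    rw [orderEmbOfFin_chainValues_zero] at h0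
    rw [Fin.zero_eta, orderEmbOfFin_chainValues_zero]
    exact h0
  · simp only [legSeq, tableauOfPath, if_pos (Nat.le_of_lt_succ hi)]
    exact sort_getD_eq_orderEmbOfFin _ _ ⟨i + 1, hi⟩ 0

lemma inArm_tableauOfPath {m : ℕ} : InArm n (tableauOfPath n w) m ↔ m ∈ chainValues E S w := by
  rw [inArm_iff_mem_range, hw.armSeq_tableauOfPath, range_orderEmbOfFin, mem_coe]

lemma inLeg_tableauOfPath {m : ℕ} : InLeg n (tableauOfPath n w) m ↔ m ∈ chainValues N W w := by
  rw [inLeg_iff_mem_range, hw.legSeq_tableauOfPath, range_orderEmbOfFin, mem_coe]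

lemma surjOn_tableauOfPath :
    Set.SurjOn (tableauOfPath n w) (cells n) (Set.Icc 1 (2 * n + 4)) := by
  intro m hm
  by_cases hA : m ∈ chainValues E S w
  · obtain ⟨j, hj, h⟩ := hw.inArm_tableauOfPath.2 hA
    exact ⟨(0, j), arm_mem_cells hj, h⟩
  by_cases hL : m ∈ chainValues N W w
  · obtain ⟨i, hi, h⟩ := hw.inLeg_tableauOfPath.2 hL
    exact ⟨(i, 0), leg_mem_cells hi, h⟩
  refine ⟨(1, 1), heart_mem_cells, ?_⟩
  rw [mem_chainValues] at hA hL
  obtain ⟨hm1, hm2⟩ := hm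
  obtain ⟨i, hi⟩ := hw.exists_backStep
  have hlen := (isPath_iff.1 hw).1
  rcases (by omega : m = 1 ∨ m = 2 ∨ 3 ≤ m) with rfl | rfl | hm3
  · exact absurd (Or.inl rfl) hA
  · rcases hi with hi | hi
    · exact absurd (Or.inr (Or.inl ⟨rfl, List.mem_of_getElem hi⟩)) hA
    · exact absurd (Or.inr (Or.inl ⟨rfl, List.mem_of_getElem hi⟩)) hL
  · have hk : m - 3 < w.length := by omega
    rw [tableauOfPath_heart n, hw.backStepIdx_eq (i := ⟨m - 3, hk⟩)]
    · simp only
      omega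
    · cases h : w[(⟨m - 3, hk⟩ : Fin w.length)]
      · exact absurd (Or.inr (Or.inr ⟨_, h, by simp; omega⟩)) hL
      · exact Or.inl rfl
      · exact absurd (Or.inr (Or.inr ⟨_, h, by simp; omega⟩)) hA
      · exact Or.inr rfl

lemma mapsTo_tableauOfPath :
    Set.MapsTo (tableauOfPath n w) (cells n) (Set.Icc 1 (2 * n + 4)) := by
  have hlen := (isPath_iff.1 hw).1
  intro c hc
  rcases mem_cells_iff.1 hc with ⟨j, hj, rfl⟩ | rfl | ⟨i, hi, rfl⟩
  · have h := hw.inArm_tableauOfPath.1 ⟨j, hj, rfl⟩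
    have := le_of_mem_chainValues h
    exact ⟨one_le_of_mem_chainValues h, by omega⟩
  · obtain ⟨i, hi⟩ := hw.exists_backStep
    rw [tableauOfPath_heart, hw.backStepIdx_eq hi]
    constructor <;> omega
  · have h := hw.inLeg_tableauOfPath.1 ⟨i + 1, by omega, rfl⟩
    have := le_of_mem_chainValues h
    exact ⟨one_le_of_mem_chainValues h, by omega⟩

lemma tableauOfPath_arm_one_lt_heart : tableauOfPath n w (0, 1) < tableauOfPath n w (1, 1) := by
  obtain ⟨i, hi⟩ := hw.exists_backStep
  obtain ⟨x, hx, hx1, hxi⟩ : ∃ x ∈ chainValues E S w, x ≠ 1 ∧ x < i + 3 := by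
    rcases hi with hi | hi
    · exact ⟨2, mem_chainValues.2 (Or.inr (Or.inl ⟨rfl, List.mem_of_getElem hi⟩)), by omega,
        by omega⟩
    · obtain ⟨j, hji, hj⟩ := (isPath_iff.1 hw).2.2.2.2 i hi
      exact ⟨j + 3, mem_chainValues.2 (Or.inr (Or.inr ⟨j, hj, rfl⟩)), by omega, by omega⟩
  have := orderEmbOfFin_chainValues_one_le hw.card_chainValues_E_S hx hx1
  rw [← hw.armSeq_tableauOfPath] at this
  rw [tableauOfPath_heart, hw.backStepIdx_eq hi]
  exact lt_of_le_of_lt this hxi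

lemma tableauOfPath_leg_one_lt_heart : tableauOfPath n w (1, 0) < tableauOfPath n w (1, 1) := by
  obtain ⟨i, hi⟩ := hw.exists_backStep
  obtain ⟨x, hx, hx1, hxi⟩ : ∃ x ∈ chainValues N W w, x ≠ 1 ∧ x < i + 3 := by
    rcases hi with hi | hi
    · obtain ⟨j, hji, hj⟩ := (isPath_iff.1 hw).2.2.2.1 i hi
      exact ⟨j + 3, mem_chainValues.2 (Or.inr (Or.inr ⟨j, hj, rfl⟩)), by omega, by omega⟩
    · exact ⟨2, mem_chainValues.2 (Or.inr (Or.inl ⟨rfl, List.mem_of_getElem hi⟩)), by omega,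
        by omega⟩
  have := orderEmbOfFin_chainValues_one_le hw.card_chainValues_N_W hx hx1
  rw [← hw.legSeq_tableauOfPath] at this
  rw [tableauOfPath_heart, hw.backStepIdx_eq hi]
  exact lt_of_le_of_lt this hxi

theorem isSYT_tableauOfPath : IsSYT n (tableauOfPath n w) :=
  isSYT_of_strictMono (fun _ => tableauOfPath_eq_zero) hw.mapsTo_tableauOfPath
    hw.surjOn_tableauOfPath (hw.armSeq_tableauOfPath ▸ (orderEmbOfFin _ _).strictMono)
    (hw.legSeq_tableauOfPath ▸ (orderEmbOfFin _ _).strictMono)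
    hw.tableauOfPath_arm_one_lt_heart hw.tableauOfPath_leg_one_lt_heart

theorem psi_tableauOfPath : psi n (tableauOfPath n w) = w := by
  have hT := hw.isSYT_tableauOfPath
  have hlen := (isPath_iff.1 hw).1
  refine List.ext_getElem (by rw [length_psi, hlen]) fun k h₁ h₂ => ?_
  have hmem : w[k] ∈ w := List.getElem_mem h₂
  have hheart (h : w[k] = S ∨ w[k] = W) : InHeart (tableauOfPath n w) (k + 3) := by
    rw [InHeart, tableauOfPath_heart, hw.backStepIdx_eq (i := ⟨k, h₂⟩) h]
  rw [getElem_psi]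
  cases h : w[k]
  · exact hT.psiLetter_eq_N_iff.2 <| hw.inLeg_tableauOfPath.2 <|
      mem_chainValues.2 (Or.inr (Or.inr ⟨⟨k, h₂⟩, h, rfl⟩))
  · exact hT.psiLetter_eq_S_iff.2 ⟨hheart (Or.inl h), hw.inArm_tableauOfPath.2 <|
      mem_chainValues.2 (Or.inr (Or.inl ⟨rfl, h ▸ hmem⟩))⟩
  · exact psiLetter_eq_E_iff.2 <| hw.inArm_tableauOfPath.2 <|
      mem_chainValues.2 (Or.inr (Or.inr ⟨⟨k, h₂⟩, h, rfl⟩))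
  · exact (hT.psiLetter_eq_W_iff (by omega)).2 ⟨hheart (Or.inr h), hw.inLeg_tableauOfPath.2 <|
      mem_chainValues.2 (Or.inr (Or.inl ⟨rfl, h ▸ hmem⟩))⟩

end IsPath

/-- The map `ψ` is a bijection from `SYT(θ⁽ⁿ⁾)` onto `𝒫ₙ`. -/
theorem psi_bijective (n : ℕ) :
    Set.BijOn (psi n) {T : ℕ × ℕ → ℕ | IsSYT n T} {w : List Step | IsPath n w} := by
  refine ⟨fun T hT => hT.isPath_psi, fun T₁ h₁ T₂ h₂ h => h₁.ext h₂ (fun m => ?_) (fun m => ?_),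
    fun w hw => ⟨tableauOfPath n w, hw.isSYT_tableauOfPath, hw.psi_tableauOfPath⟩⟩
  · rw [← h₁.mem_chainValues_E_S, h, h₂.mem_chainValues_E_S]
  · rw [← h₁.mem_chainValues_N_W, h, h₂.mem_chainValues_N_W]
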